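/- arXiv:2109.08644 — 2 statements merged into one kernel-verified Lean document; each statement's English description precedes it below -/
import Mathlib

section
/- Let b and b' be two bid profiles that differ only in agent i's bid, such that the strict preference rankings over goods induced by b_i and b'_i are within a partial slide of each other (i.e., b'_i is obtained from b_i by moving a single good to a lower position, keeping the relative order of all other goods). Then for every time step t during the executions of Round-Robin on b and on b', the sets of still-available goods M_t(b) and M_t(b') satisfy |M_t(b) \ M_t(b')| = |M_t(b') \ M_t(b)| ≤ 1. -/
open Finset

/-- Pick the available good with the highest bid, ties broken lexicographically
(i.e. in favor of the smaller index). -/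
noncomputable def rrPick {m : ℕ} (bid : Fin m → ℝ) (S : Finset (Fin m)) : Option (Fin m) :=
  if h : S.Nonempty then
    some (S.exists_max_image (fun g => toLex (bid g, OrderDual.toDual g)) h).choose
  else none

/-- The state of Round-Robin (available goods, partial allocation) after `t` picks:
at step `t` the active agent is `t % n` and she picks her highest-bid available good. -/
noncomputable def rrState (n : ℕ) [NeZero n] {m : ℕ} (b : Fin n → Fin m → ℝ) :
    ℕ → Finset (Fin m) × (Fin n → Finset (Fin m))
  | 0 => (Finset.univ, fun _ => ∅)
  | (t + 1) =>
    let p := rrState n b t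
    let i : Fin n := ⟨t % n, Nat.mod_lt t (Nat.pos_of_ne_zero (NeZero.ne n))⟩
    match rrPick (b i) p.1 with
    | none => p
    | some g => (p.1.erase g, Function.update p.2 i (insert g (p.2 i)))

/-- The strict preference ranking induced by a bid vector, with ties broken
lexicographically: `g` is preferred to `h` if it has a strictly larger bid, or an equal
bid and a smaller index. -/
def rrPref {m : ℕ} (bid : Fin m → ℝ) (g h : Fin m) : Prop :=
  bid h < bid g ∨ (bid g = bid h ∧ g < h)

/-! When the active agent picks `p` in one run and `q` in the other, and each good is still
available in the other run, then `p = q` unless `p = s`: her new ranking keeps every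
preference for a good other than `s`. By induction on `t`, the available sets have equal size,
differ in at most one good, and as soon as they differ `s` is missing from one of them, so
such a pick of `s` can no longer separate them further. -/

section Ranking

variable {m : ℕ}

lemma rrPref_asymm {bid : Fin m → ℝ} {g h : Fin m} (hgh : rrPref bid g h) : ¬rrPref bid h g := by
  rintro (hhg | ⟨hhg, hlt⟩) <;> rcases hgh with hgh | ⟨hgh, hlt'⟩
  exacts [hhg.not_gt hgh, hhg.ne hgh, hgh.ne hhg, hlt.not_gt hlt']

lemma rrPick_spec {bid : Fin m → ℝ} {S : Finset (Fin m)} {p : Fin m}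
    (h : rrPick bid S = some p) : p ∈ S ∧ ∀ g ∈ S, g ≠ p → rrPref bid p g := by
  unfold rrPick at h
  split_ifs at h with hS
  obtain ⟨hpS, hmax⟩ := (S.exists_max_image (fun g => toLex (bid g, OrderDual.toDual g)) hS).choose_spec
  cases Option.some.inj h
  refine ⟨hpS, fun g hg hgp => ?_⟩
  rcases Prod.Lex.le_iff.mp (hmax g hg) with hlt | ⟨heq, hle⟩
  · exact Or.inl hlt
  · exact Or.inr ⟨heq.symm, (OrderDual.toDual_le_toDual.mp hle).lt_of_ne' hgp⟩

lemma exists_rrPick_eq_some (bid : Fin m → ℝ) {S : Finset (Fin m)} (hS : S.Nonempty) :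
    ∃ p, rrPick bid S = some p := by
  simp [rrPick, hS]

/-- Passing from `α` to `β`, only the good `s` may move down the ranking. -/
def KeepsPrefsExcept (s : Fin m) (α β : Fin m → ℝ) : Prop :=
  ∀ g h : Fin m, g ≠ s → rrPref α g h → rrPref β g h

lemma KeepsPrefsExcept.refl (s : Fin m) (α : Fin m → ℝ) : KeepsPrefsExcept s α α :=
  fun _ _ _ => id

lemma KeepsPrefsExcept.rrPick_eq {s : Fin m} {α β : Fin m → ℝ} (hkeep : KeepsPrefsExcept s α β)
    {S T : Finset (Fin m)} {p q : Fin m} (hp : rrPick α S = some p) (hq : rrPick β T = some q)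
    (hpT : p ∈ T) (hqS : q ∈ S) (hps : p ≠ s) : p = q := by
  by_contra hpq
  exact rrPref_asymm (hkeep p q hps ((rrPick_spec hp).2 q hqS (Ne.symm hpq)))
    ((rrPick_spec hq).2 p hpT hpq)

end Ranking

lemma rrState_succ_fst (n : ℕ) [NeZero n] {m : ℕ} (b : Fin n → Fin m → ℝ) (t : ℕ) :
    (rrState n b (t + 1)).1 = (rrState n b t).1 \
      (rrPick (b ⟨t % n, Nat.mod_lt t (NeZero.pos n)⟩) (rrState n b t).1).toFinset := by
  rw [rrState]
  split <;> simp_all [sdiff_singleton_eq_erase]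

section Invariant

variable {α : Type*} [DecidableEq α]

/-- The relation kept between the available goods of the two runs. The last field is what
lets it survive a step: while the runs differ, the slid good is gone from one of them. -/
structure SlideClose (s : α) (S T : Finset α) : Prop where
  card_eq : #S = #T
  card_sdiff_le : #(S \ T) ≤ 1
  not_mem_inter : S ≠ T → s ∉ S ∩ T

lemma SlideClose.refl (s : α) (S : Finset α) : SlideClose s S S :=
  ⟨rfl, by simp, fun h => absurd rfl h⟩

variable {s p q : α} {S T : Finset α}

lemma SlideClose.sdiff_subset_singleton (h : SlideClose s S T) (hp : p ∈ S)
    (hcross : p ∈ T → q ∈ S → p ≠ s → p = q) (hqS : q ∈ S) (hqp : q ≠ p) : S \ T ⊆ {p} := by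
  by_cases hST : S = T
  · simp [hST]
  have hpT : p ∉ T := fun hpT =>
    hqp (hcross hpT hqS fun hps => h.not_mem_inter hST (hps ▸ mem_inter.mpr ⟨hp, hpT⟩)).symm
  intro z hz
  exact mem_singleton.mpr (card_le_one.mp h.card_sdiff_le z hz p (mem_sdiff.mpr ⟨hp, hpT⟩))

lemma SlideClose.erase_erase (h : SlideClose s S T) (hp : p ∈ S) (hq : q ∈ T)
    (hcross : p ∈ T → q ∈ S → p ≠ s → p = q) : SlideClose s (S.erase p) (T.erase q) where
  card_eq := by rw [card_erase_of_mem hp, card_erase_of_mem hq, h.card_eq]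
  card_sdiff_le := by
    by_cases hqS : q ∈ S ∧ q ≠ p
    · have hsub : S.erase p \ T.erase q ⊆ {q} := by
        intro z hz
        simp only [mem_sdiff, mem_erase, not_and_or, not_not] at hz
        obtain ⟨⟨hzp, hzS⟩, hzq | hzT⟩ := hz
        · exact mem_singleton.mpr hzq
        · exact absurd (mem_singleton.mp
            (h.sdiff_subset_singleton hp hcross hqS.1 hqS.2 (mem_sdiff.mpr ⟨hzS, hzT⟩))) hzp
      exact (card_le_card hsub).trans (card_singleton q).le
    · have hsub : S.erase p \ T.erase q ⊆ S \ T := by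
        intro z hz
        simp only [mem_sdiff, mem_erase, not_and_or, not_not] at hz ⊢
        obtain ⟨⟨hzp, hzS⟩, hzq | hzT⟩ := hz
        · exact absurd ⟨hzq ▸ hzS, hzq ▸ hzp⟩ hqS
        · exact ⟨hzS, hzT⟩
      exact (card_le_card hsub).trans h.card_sdiff_le
  not_mem_inter hne hs := by
    by_cases hST : S = T
    · subst hST
      have hps : p = s := by
        by_contra hps
        exact hne (by rw [hcross hp hq hps])
      exact (mem_erase.mp (mem_inter.mp hs).1).1 hps.symm
    · exact h.not_mem_inter hST (inter_subset_inter (erase_subset p S) (erase_subset q T) hs)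

end Invariant

lemma slideClose_rrState {n m : ℕ} [NeZero n] {b b' : Fin n → Fin m → ℝ} {s : Fin m}
    (hkeep : ∀ j, KeepsPrefsExcept s (b j) (b' j)) (t : ℕ) :
    SlideClose s (rrState n b t).1 (rrState n b' t).1 := by
  induction t with
  | zero => exact SlideClose.refl s univ
  | succ t ih =>
    rw [rrState_succ_fst, rrState_succ_fst]
    set j : Fin n := ⟨t % n, Nat.mod_lt t (NeZero.pos n)⟩
    rcases (rrState n b t).1.eq_empty_or_nonempty with hS | hS
    · have hT : (rrState n b' t).1 = ∅ := card_eq_zero.mp (ih.card_eq ▸ hS ▸ card_empty)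
      rw [hS, hT, empty_sdiff, empty_sdiff]
      exact SlideClose.refl s ∅
    · have hT : (rrState n b' t).1.Nonempty := card_pos.mp (ih.card_eq ▸ card_pos.mpr hS)
      obtain ⟨p, hp⟩ := exists_rrPick_eq_some (b j) hS
      obtain ⟨q, hq⟩ := exists_rrPick_eq_some (b' j) hT
      rw [hp, hq, Option.toFinset_some, Option.toFinset_some, sdiff_singleton_eq_erase,
        sdiff_singleton_eq_erase]
      exact ih.erase_erase (rrPick_spec hp).1 (rrPick_spec hq).1 ((hkeep j).rrPick_eq hp hq)

/-- if agent i's bid changes so that her induced strict preference ranking is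
within a partial slide of the original one (a single good `s` is moved to a lower position,
the relative order of all other goods being kept), then at every time step the sets of
available goods in the two runs of Round-Robin differ by at most one good each way. -/
theorem roundRobin_partial_slide_available_goods {n m : ℕ} [NeZero n]
    (b : Fin n → Fin m → ℝ) (i : Fin n) (c : Fin m → ℝ) (s : Fin m)
    (hsame : ∀ g h : Fin m, g ≠ s → h ≠ s → (rrPref (b i) g h ↔ rrPref c g h))
    (hslide : ∀ g : Fin m, rrPref (b i) g s → rrPref c g s) :
    ∀ t : ℕ,
      ((rrState n b t).1 \ (rrState n (Function.update b i c) t).1).card =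
        ((rrState n (Function.update b i c) t).1 \ (rrState n b t).1).card ∧
      ((rrState n b t).1 \ (rrState n (Function.update b i c) t).1).card ≤ 1 := by
  have hkeep : KeepsPrefsExcept s (b i) c := fun g h hgs hgh => by
    by_cases hhs : h = s
    · exact hhs ▸ hslide g (hhs ▸ hgh)
    · exact (hsame g h hgs hhs).mp hgh
  have hkeep_all : ∀ j, KeepsPrefsExcept s (b j) (Function.update b i c j) := fun j => by
    rcases eq_or_ne j i with rfl | hji
    · simpa using hkeep
    · simpa [hji] using KeepsPrefsExcept.refl s (b j)
  intro t
  have hclose := slideClose_rrState hkeep_all t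
  exact ⟨card_sdiff_comm hclose.card_eq, hclose.card_sdiff_le⟩
end

section
/- Suppose for two agents an allocation (A_1, A_2) is EFX with respect to agent 1's additive valuation v_1 and v_1(A_1) = (2/3)·μ_1, where μ_1 = μ_1(2,M). Then A_2 contains exactly two goods of positive v_1-value, each of v_1-value exactly (2/3)·μ_1, v_1(A_2) = (4/3)·μ_1, and A_1 contains at least two goods of positive v_1-value. -/
/-- The maximin share for two agents: maximum over bipartitions of all goods of the
minimum of the two bundle values. -/
noncomputable def mms2 {G : Type} [Fintype G] [DecidableEq G] (v : G → ℝ) : ℝ :=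
  sSup {x : ℝ | ∃ S : Finset G, x = min (∑ g ∈ S, v g) (∑ g ∈ Sᶜ, v g)}

lemma mms2_bddAbove {G : Type} [Fintype G] [DecidableEq G] (v : G → ℝ) :
    BddAbove {x : ℝ | ∃ S : Finset G, x = min (∑ g ∈ S, v g) (∑ g ∈ Sᶜ, v g)} := by
  have h : {x : ℝ | ∃ S : Finset G, x = min (∑ g ∈ S, v g) (∑ g ∈ Sᶜ, v g)} =
      Set.range (fun S : Finset G => min (∑ g ∈ S, v g) (∑ g ∈ Sᶜ, v g)) := by
    ext x; simp [Set.range, eq_comm]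
  rw [h]
  exact (Set.finite_range _).bddAbove

lemma min_le_mms2 {G : Type} [Fintype G] [DecidableEq G] (v : G → ℝ) (S : Finset G) :
    min (∑ g ∈ S, v g) (∑ g ∈ Sᶜ, v g) ≤ mms2 v :=
  le_csSup (mms2_bddAbove v) ⟨S, rfl⟩

lemma mms2_le {G : Type} [Fintype G] [DecidableEq G] (v : G → ℝ) {c : ℝ}
    (h : ∀ S : Finset G, min (∑ g ∈ S, v g) (∑ g ∈ Sᶜ, v g) ≤ c) :
    mms2 v ≤ c :=
  csSup_le ⟨_, ⟨∅, rfl⟩⟩ (by rintro x ⟨S, rfl⟩; exact h S)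

/-- if an allocation (A, Aᶜ) is EFX with respect to agent 1's valuation and
v₁(A) = (2/3)·μ₁ with μ₁ > 0, then Aᶜ contains exactly two goods of positive v₁-value, each
of value exactly (2/3)·μ₁, v₁(Aᶜ) = (4/3)·μ₁, and A contains at least two goods of positive
v₁-value. -/
theorem efx_worst_case_structure {G : Type} [Fintype G] [DecidableEq G]
    (v : G → ℝ) (hv : ∀ g, 0 ≤ v g) (hμ : 0 < mms2 v)
    (A : Finset G)
    (hefx : ∀ g ∈ Aᶜ, 0 < v g → ∑ x ∈ Aᶜ.erase g, v x ≤ ∑ x ∈ A, v x)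
    (hval : ∑ x ∈ A, v x = (2 / 3) * mms2 v) :
    (Aᶜ.filter (fun g => 0 < v g)).card = 2 ∧
    (∀ g ∈ Aᶜ, 0 < v g → v g = (2 / 3) * mms2 v) ∧
    (∑ x ∈ Aᶜ, v x = (4 / 3) * mms2 v) ∧
    2 ≤ (A.filter (fun g => 0 < v g)).card := by
  classical
  set μ := mms2 v with hμdef
  set T := ∑ g : G, v g with hTdef
  have hcompl : ∀ S : Finset G, ∑ x ∈ Sᶜ, v x = T - ∑ x ∈ S, v x := by
    intro S
    have := Finset.sum_add_sum_compl S v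
    linarith
  -- 2μ ≤ T
  have hT2 : 2 * μ ≤ T := by
    have h := mms2_le v (c := T / 2) (fun S => by
      rcases le_total (∑ g ∈ S, v g) (T / 2) with h1 | h1
      · exact le_trans (min_le_left _ _) h1
      · refine le_trans (min_le_right _ _) ?_
        rw [hcompl S]; linarith)
    linarith
  have hAc : ∑ x ∈ Aᶜ, v x = T - (2 / 3) * μ := by rw [hcompl A, hval]
  have hAcge : (4 / 3) * μ ≤ ∑ x ∈ Aᶜ, v x := by rw [hAc]; linarith
  set F := Aᶜ.filter (fun g => 0 < v g) with hFdef
  have hFsub : F ⊆ Aᶜ := Finset.filter_subset _ _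
  have hsumF : ∑ x ∈ F, v x = ∑ x ∈ Aᶜ, v x :=
    Finset.sum_filter_of_ne (fun x _ hx => lt_of_le_of_ne (hv x) (Ne.symm hx))
  -- each positive good in Aᶜ has value at least (2/3)μ
  have hglb : ∀ g ∈ F, (2 / 3) * μ ≤ v g := by
    intro g hg
    have hgc : g ∈ Aᶜ := hFsub hg
    have hgpos : 0 < v g := (Finset.mem_filter.mp hg).2
    have he := hefx g hgc hgpos
    rw [Finset.sum_erase_eq_sub hgc, hval] at he
    linarith
  -- F has exactly two elements
  have hcard2 : F.card = 2 := by
    by_contra hnecard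
    rcases lt_or_gt_of_ne hnecard with hlt | hgt
    · -- F.card ≤ 1 : contradiction via μ ≤ (2/3)μ
      have hkey : ∀ S : Finset G, min (∑ g ∈ S, v g) (∑ g ∈ Sᶜ, v g) ≤ (2 / 3) * μ := by
        intro S
        rcases F.eq_empty_or_nonempty with hFe | ⟨g, hg⟩
        · exfalso
          rw [hFe, Finset.sum_empty] at hsumF
          rw [← hsumF] at hAcge
          linarith
        have hFg : F ⊆ {g} := by
          intro x hx
          have := Finset.card_le_one.mp (Nat.lt_succ_iff.mp hlt) x hx g hg
          simp [this]
        have hsumAc : ∑ x ∈ Aᶜ, v x ≤ v g := by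
          rw [← hsumF]
          calc ∑ x ∈ F, v x ≤ ∑ x ∈ ({g} : Finset G), v x :=
                Finset.sum_le_sum_of_subset_of_nonneg hFg (fun x _ _ => hv x)
            _ = v g := Finset.sum_singleton _ _
        have hTle : T ≤ (2 / 3) * μ + v g := by
          have := hcompl A
          rw [hval] at this
          linarith
        by_cases hgS : g ∈ S
        · refine le_trans (min_le_right _ _) ?_
          rw [hcompl S]
          have : v g ≤ ∑ x ∈ S, v x :=
            Finset.single_le_sum (fun x _ => hv x) hgS
          linarith
        · refine le_trans (min_le_left _ _) ?_
          have hSsub : S ⊆ Finset.univ.erase g := fun x hx =>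
            Finset.mem_erase.mpr ⟨fun h => hgS (h ▸ hx), Finset.mem_univ x⟩
          calc ∑ x ∈ S, v x ≤ ∑ x ∈ Finset.univ.erase g, v x :=
                Finset.sum_le_sum_of_subset_of_nonneg hSsub (fun x _ _ => hv x)
            _ = T - v g := by rw [Finset.sum_erase_eq_sub (Finset.mem_univ g)]
            _ ≤ (2 / 3) * μ := by linarith
      have := mms2_le v hkey
      rw [← hμdef] at this
      linarith
    · -- F.card ≥ 3 : contradiction via EFX
      have hFne : F.Nonempty := Finset.card_pos.mp (by omega)
      obtain ⟨g₁, hg₁⟩ := hFne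
      have hcardE : 1 < (F.erase g₁).card := by
        rw [Finset.card_erase_of_mem hg₁]; omega
      obtain ⟨a, ha, b, hb, hab⟩ := Finset.one_lt_card.mp hcardE
      have haF : a ∈ F := Finset.mem_of_mem_erase ha
      have hbF : b ∈ F := Finset.mem_of_mem_erase hb
      have hsubpair : ({a, b} : Finset G) ⊆ Aᶜ.erase g₁ := by
        intro x hx
        rcases Finset.mem_insert.mp hx with h | h
        · exact h ▸ Finset.mem_erase.mpr ⟨(Finset.mem_erase.mp ha).1, hFsub haF⟩
        · rw [Finset.mem_singleton.mp h]
          exact Finset.mem_erase.mpr ⟨(Finset.mem_erase.mp hb).1, hFsub hbF⟩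
      have hge : v a + v b ≤ ∑ x ∈ Aᶜ.erase g₁, v x := by
        calc v a + v b = ∑ x ∈ ({a, b} : Finset G), v x := (Finset.sum_pair hab).symm
          _ ≤ ∑ x ∈ Aᶜ.erase g₁, v x :=
              Finset.sum_le_sum_of_subset_of_nonneg hsubpair (fun x _ _ => hv x)
      have he := hefx g₁ (hFsub hg₁) (Finset.mem_filter.mp hg₁).2
      rw [hval] at he
      have h1 := hglb a haF
      have h2 := hglb b hbF
      linarith
  obtain ⟨g₁, g₂, hne, hFeq⟩ := Finset.card_eq_two.mp hcard2
  have hg₁F : g₁ ∈ F := hFeq ▸ Finset.mem_insert_self _ _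
  have hg₂F : g₂ ∈ F := hFeq ▸ Finset.mem_insert_of_mem (Finset.mem_singleton_self _)
  have hsum12 : ∑ x ∈ Aᶜ, v x = v g₁ + v g₂ := by
    rw [← hsumF, hFeq, Finset.sum_pair hne]
  -- EFX at g₁ and g₂ gives exact values
  have he1 := hefx g₁ (hFsub hg₁F) (Finset.mem_filter.mp hg₁F).2
  rw [Finset.sum_erase_eq_sub (hFsub hg₁F), hval, hsum12] at he1
  have he2 := hefx g₂ (hFsub hg₂F) (Finset.mem_filter.mp hg₂F).2
  rw [Finset.sum_erase_eq_sub (hFsub hg₂F), hval, hsum12] at he2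
  have hv1 : v g₁ = (2 / 3) * μ := le_antisymm (by linarith) (hglb g₁ hg₁F)
  have hv2 : v g₂ = (2 / 3) * μ := le_antisymm (by linarith) (hglb g₂ hg₂F)
  have hAcval : ∑ x ∈ Aᶜ, v x = (4 / 3) * μ := by rw [hsum12, hv1, hv2]; ring
  have heach : ∀ g ∈ Aᶜ, 0 < v g → v g = (2 / 3) * μ := by
    intro g hg hgpos
    have hgF : g ∈ F := Finset.mem_filter.mpr ⟨hg, hgpos⟩
    rw [hFeq] at hgF
    rcases Finset.mem_insert.mp hgF with h | h
    · exact h ▸ hv1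
    · exact (Finset.mem_singleton.mp h) ▸ hv2
  refine ⟨hcard2, heach, hAcval, ?_⟩
  -- A contains at least two positive goods
  by_contra hcontra
  push_neg at hcontra
  set FA := A.filter (fun g => 0 < v g) with hFAdef
  have hsumFA : ∑ x ∈ FA, v x = ∑ x ∈ A, v x :=
    Finset.sum_filter_of_ne (fun x _ hx => lt_of_le_of_ne (hv x) (Ne.symm hx))
  have hFAcard1 : FA.card = 1 := by
    have h01 : FA.card = 0 ∨ FA.card = 1 := by omega
    rcases h01 with h0 | h1
    · exfalso
      have : FA = ∅ := Finset.card_eq_zero.mp h0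
      rw [this, Finset.sum_empty] at hsumFA
      rw [hval] at hsumFA
      linarith
    · exact h1
  obtain ⟨h, hFAeq⟩ := Finset.card_eq_one.mp hFAcard1
  have hhA : h ∈ A := (Finset.mem_filter.mp (hFAeq ▸ Finset.mem_singleton_self h)).1
  have hvh : v h = (2 / 3) * μ := by
    have : ∑ x ∈ FA, v x = v h := by rw [hFAeq, Finset.sum_singleton]
    rw [hsumFA, hval] at this
    linarith
  -- every good outside {h, g₁, g₂} has value zero
  have hzero : ∀ x : G, x ≠ h → x ≠ g₁ → x ≠ g₂ → v x = 0 := by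
    intro x hxh hx1 hx2
    by_contra hx0
    have hxpos : 0 < v x := lt_of_le_of_ne (hv x) (Ne.symm hx0)
    by_cases hxA : x ∈ A
    · have : x ∈ FA := Finset.mem_filter.mpr ⟨hxA, hxpos⟩
      rw [hFAeq, Finset.mem_singleton] at this
      exact hxh this
    · have hxAc : x ∈ Aᶜ := Finset.mem_compl.mpr hxA
      have : x ∈ F := Finset.mem_filter.mpr ⟨hxAc, hxpos⟩
      rw [hFeq] at this
      rcases Finset.mem_insert.mp this with h' | h'
      · exact hx1 h'
      · exact hx2 (Finset.mem_singleton.mp h')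
  have hg₁Ac : g₁ ∈ Aᶜ := hFsub hg₁F
  have hg₂Ac : g₂ ∈ Aᶜ := hFsub hg₂F
  have hh1 : h ≠ g₁ := fun h' => (Finset.mem_compl.mp hg₁Ac) (h' ▸ hhA)
  have hh2 : h ≠ g₂ := fun h' => (Finset.mem_compl.mp hg₂Ac) (h' ▸ hhA)
  set P3 : Finset G := {h, g₁, g₂} with hP3def
  have hP3card : P3.card = 3 := by
    rw [hP3def]
    rw [Finset.card_insert_of_notMem (by simp [hh1, hh2]),
        Finset.card_insert_of_notMem (by simp [hne]), Finset.card_singleton]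
  have hP3val : ∀ x ∈ P3, v x = (2 / 3) * μ := by
    intro x hx
    rw [hP3def] at hx
    rcases Finset.mem_insert.mp hx with h' | h'
    · exact h' ▸ hvh
    · rcases Finset.mem_insert.mp h' with h'' | h''
      · exact h'' ▸ hv1
      · exact (Finset.mem_singleton.mp h'') ▸ hv2
  have hTval : T = 2 * μ := by
    have := hcompl A
    rw [hval, hAcval] at this
    linarith
  -- every partition has min at most (2/3)μ
  have hkey : ∀ S : Finset G, min (∑ g ∈ S, v g) (∑ g ∈ Sᶜ, v g) ≤ (2 / 3) * μ := by
    intro S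
    have hSval : ∑ x ∈ S, v x = ((S ∩ P3).card : ℝ) * ((2 / 3) * μ) := by
      have h1 : ∑ x ∈ S, v x = ∑ x ∈ S ∩ P3, v x := by
        refine (Finset.sum_subset Finset.inter_subset_left ?_).symm
        intro x hxS hxn
        have hxP3 : x ∉ P3 := fun hc => hxn (Finset.mem_inter.mpr ⟨hxS, hc⟩)
        rw [hP3def] at hxP3
        simp only [Finset.mem_insert, Finset.mem_singleton, not_or] at hxP3
        exact hzero x hxP3.1 hxP3.2.1 hxP3.2.2
      rw [h1]
      rw [Finset.sum_congr rfl (fun x hx => hP3val x (Finset.mem_inter.mp hx).2)]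
      rw [Finset.sum_const, nsmul_eq_mul]
    have hccard : (S ∩ P3).card ≤ 3 := hP3card ▸ Finset.card_le_card Finset.inter_subset_right
    rcases le_or_gt (S ∩ P3).card 1 with hc | hc
    · refine le_trans (min_le_left _ _) ?_
      rw [hSval]
      have : ((S ∩ P3).card : ℝ) ≤ 1 := by exact_mod_cast hc
      nlinarith
    · refine le_trans (min_le_right _ _) ?_
      rw [hcompl S, hSval, hTval]
      have : (2 : ℝ) ≤ ((S ∩ P3).card : ℝ) := by exact_mod_cast hc
      nlinarith
  have := mms2_le v hkey
  rw [← hμdef] at this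
  linarith
end
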